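/- The sequence c(n) converges to 2/37 as n → ∞ (Tendsto of c along atTop to the neighborhood filter of 2/37). -/

import Mathlib

open Real

/-- The numerator `N(n)`. -/
noncomputable def NAW (x : ℝ) : ℝ :=
  (32 + 552 * x + 3132 * x ^ 2 + 8037 * x ^ 3 + 9648 * x ^ 4 + 4401 * x ^ 5) *
      Real.sqrt (3 + 9 * x + 9 * x ^ 2) -
    (16 + 60 * x + 57 * x ^ 2) * Real.sqrt (3 * x) *
      Real.sqrt (-56 - 555 * x - 1935 * x ^ 2 - 1620 * x ^ 3 + 7173 * x ^ 4 + 22788 * x ^ 5 +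
        26649 * x ^ 6 + 11907 * x ^ 7)

/-- The denominator polynomial `D(n)`. -/
noncomputable def DAW (x : ℝ) : ℝ :=
  64 + 672 * x + 2916 * x ^ 2 + 6624 * x ^ 3 + 8181 * x ^ 4 + 4995 * x ^ 5 + 999 * x ^ 6

/-- The sharp lower curvature bound `c(n)` of the Aloff-Wallach space `W(n,n+1)`. -/
noncomputable def cMin (n : ℕ) : ℝ :=
  (17 + 63 * (n : ℝ) + 63 * (n : ℝ) ^ 2) / (16 + 48 * (n : ℝ) + 48 * (n : ℝ) ^ 2) -
    (1 / 16) * Real.sqrt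
      ((7 + 33 * (n : ℝ) + 33 * (n : ℝ) ^ 2) ^ 2 / (1 + 3 * (n : ℝ) + 3 * (n : ℝ) ^ 2) ^ 2 +
        4 * (9 * (1 + 2 * (n : ℝ)) / Real.sqrt (3 + 9 * (n : ℝ) + 9 * (n : ℝ) ^ 2) +
          NAW (n : ℝ) / DAW (n : ℝ)) ^ 2)

noncomputable def FAW (t : ℝ) : ℝ :=
  (17*t^2+63*t+63)/(16*t^2+48*t+48) -
    (1/16) * Real.sqrt (
      (7*t^2+33*t+33)^2/(t^2+3*t+3)^2 +
      4*( 9*(t+2)/Real.sqrt (3*t^2+9*t+9) +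
        ((32*t^5+552*t^4+3132*t^3+8037*t^2+9648*t+4401) * Real.sqrt (3*t^2+9*t+9) -
          (16*t^2+60*t+57)*Real.sqrt 3 *
            Real.sqrt (-56*t^7-555*t^6-1935*t^5-1620*t^4+7173*t^3+22788*t^2+26649*t+11907)) /
        (64*t^6+672*t^5+2916*t^4+6624*t^3+8181*t^2+4995*t+999) )^2 )

lemma key_eq (x : ℝ) (hx : 1 ≤ x) :
    (17 + 63 * x + 63 * x ^ 2) / (16 + 48 * x + 48 * x ^ 2) -
    (1 / 16) * Real.sqrt
      ((7 + 33 * x + 33 * x ^ 2) ^ 2 / (1 + 3 * x + 3 * x ^ 2) ^ 2 +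
        4 * (9 * (1 + 2 * x) / Real.sqrt (3 + 9 * x + 9 * x ^ 2) +
          NAW x / DAW x) ^ 2) = FAW x⁻¹ := by
  have hx0 : (0:ℝ) < x := lt_of_lt_of_le one_pos hx
  have hxne : x ≠ 0 := ne_of_gt hx0
  have ht0 : 0 < x⁻¹ := inv_pos.mpr hx0
  have hs : Real.sqrt (3 + 9*x + 9*x^2) = x * Real.sqrt (3*x⁻¹^2+9*x⁻¹+9) := by
    rw [show 3 + 9*x + 9*x^2 = x^2 * (3*x⁻¹^2+9*x⁻¹+9) by field_simp,
      Real.sqrt_mul (by positivity), Real.sqrt_sq hx0.le]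
  have hsx : Real.sqrt (3*x) = Real.sqrt 3 * Real.sqrt x := Real.sqrt_mul (by norm_num) x
  have hR : Real.sqrt (-56 - 555*x - 1935*x^2 - 1620*x^3 + 7173*x^4 + 22788*x^5 +
        26649*x^6 + 11907*x^7)
      = x^3 * Real.sqrt x *
        Real.sqrt (-56*x⁻¹^7-555*x⁻¹^6-1935*x⁻¹^5-1620*x⁻¹^4+7173*x⁻¹^3+22788*x⁻¹^2+26649*x⁻¹+11907) := by
    rw [show -56 - 555*x - 1935*x^2 - 1620*x^3 + 7173*x^4 + 22788*x^5 + 26649*x^6 + 11907*x^7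
        = (x^3)^2 * x * (-56*x⁻¹^7-555*x⁻¹^6-1935*x⁻¹^5-1620*x⁻¹^4+7173*x⁻¹^3+22788*x⁻¹^2+26649*x⁻¹+11907)
        by field_simp,
      Real.sqrt_mul (by positivity), Real.sqrt_mul (by positivity),
      Real.sqrt_sq (by positivity)]
  have hxx : Real.sqrt x * Real.sqrt x = x := Real.mul_self_sqrt hx0.le
  have e1 : (32 + 552*x + 3132*x^2 + 8037*x^3 + 9648*x^4 + 4401*x^5) * x
      = x^6 * (32*x⁻¹^5+552*x⁻¹^4+3132*x⁻¹^3+8037*x⁻¹^2+9648*x⁻¹+4401) := by field_simp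
  have e2 : (16 + 60*x + 57*x^2) * x^4 = x^6 * (16*x⁻¹^2+60*x⁻¹+57) := by field_simp
  have hN : NAW x = x^6 * ((32*x⁻¹^5+552*x⁻¹^4+3132*x⁻¹^3+8037*x⁻¹^2+9648*x⁻¹+4401) *
      Real.sqrt (3*x⁻¹^2+9*x⁻¹+9) -
      (16*x⁻¹^2+60*x⁻¹+57)*Real.sqrt 3 *
        Real.sqrt (-56*x⁻¹^7-555*x⁻¹^6-1935*x⁻¹^5-1620*x⁻¹^4+7173*x⁻¹^3+22788*x⁻¹^2+26649*x⁻¹+11907)) := by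
    rw [NAW, hs, hsx, hR]
    linear_combination Real.sqrt (3*x⁻¹^2+9*x⁻¹+9) * e1 - (Real.sqrt 3 *
        Real.sqrt (-56*x⁻¹^7-555*x⁻¹^6-1935*x⁻¹^5-1620*x⁻¹^4+7173*x⁻¹^3+22788*x⁻¹^2+26649*x⁻¹+11907)) * e2
      - ((16 + 60*x + 57*x^2) * x^3 * Real.sqrt 3 *
        Real.sqrt (-56*x⁻¹^7-555*x⁻¹^6-1935*x⁻¹^5-1620*x⁻¹^4+7173*x⁻¹^3+22788*x⁻¹^2+26649*x⁻¹+11907)) * hxx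
  have hD : DAW x = x^6 * (64*x⁻¹^6+672*x⁻¹^5+2916*x⁻¹^4+6624*x⁻¹^3+8181*x⁻¹^2+4995*x⁻¹+999) := by
    rw [DAW]; field_simp
  have hDt : (0:ℝ) < 64*x⁻¹^6+672*x⁻¹^5+2916*x⁻¹^4+6624*x⁻¹^3+8181*x⁻¹^2+4995*x⁻¹+999 := by
    have h2 := pow_nonneg ht0.le 2
    have h3 := pow_nonneg ht0.le 3
    have h4 := pow_nonneg ht0.le 4
    have h5 := pow_nonneg ht0.le 5
    have h6 := pow_nonneg ht0.le 6
    linarith [ht0.le]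
  have e3 : 9 * (1 + 2*x) / Real.sqrt (3 + 9*x + 9*x^2) = 9*(x⁻¹+2)/Real.sqrt (3*x⁻¹^2+9*x⁻¹+9) := by
    rw [hs, show (9:ℝ) * (1 + 2*x) = x * (9*(x⁻¹+2)) by field_simp,
      mul_div_mul_left _ _ hxne]
  have e4 : NAW x / DAW x = ((32*x⁻¹^5+552*x⁻¹^4+3132*x⁻¹^3+8037*x⁻¹^2+9648*x⁻¹+4401) *
      Real.sqrt (3*x⁻¹^2+9*x⁻¹+9) -
      (16*x⁻¹^2+60*x⁻¹+57)*Real.sqrt 3 *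
        Real.sqrt (-56*x⁻¹^7-555*x⁻¹^6-1935*x⁻¹^5-1620*x⁻¹^4+7173*x⁻¹^3+22788*x⁻¹^2+26649*x⁻¹+11907)) /
      (64*x⁻¹^6+672*x⁻¹^5+2916*x⁻¹^4+6624*x⁻¹^3+8181*x⁻¹^2+4995*x⁻¹+999) := by
    rw [hN, hD, mul_div_mul_left _ _ (by positivity)]
  have e5 : (7 + 33*x + 33*x^2)^2 / (1 + 3*x + 3*x^2)^2
      = (7*x⁻¹^2+33*x⁻¹+33)^2/(x⁻¹^2+3*x⁻¹+3)^2 := by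
    rw [div_eq_div_iff (by positivity) (by positivity)]
    field_simp
  have e6 : (17 + 63*x + 63*x^2) / (16 + 48*x + 48*x^2)
      = (17*x⁻¹^2+63*x⁻¹+63)/(16*x⁻¹^2+48*x⁻¹+48) := by
    rw [div_eq_div_iff (by positivity) (by positivity)]
    field_simp
  rw [FAW, e3, e4, e5, e6]

lemma FAW_zero : FAW 0 = 2/37 := by
  have h9 : Real.sqrt 9 = 3 := by
    rw [show (9:ℝ) = 3^2 by norm_num, Real.sqrt_sq (by norm_num)]
  have h11907 : Real.sqrt 11907 = 63 * Real.sqrt 3 := by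
    rw [show (11907:ℝ) = 63^2*3 by norm_num, Real.sqrt_mul (by positivity),
      Real.sqrt_sq (by norm_num)]
  have h3 : Real.sqrt 3 * Real.sqrt 3 = 3 := Real.mul_self_sqrt (by norm_num)
  have key : (7*(0:ℝ)^2+33*0+33)^2/((0:ℝ)^2+3*0+3)^2 +
      4*( 9*((0:ℝ)+2)/Real.sqrt (3*0^2+9*0+9) +
        ((32*(0:ℝ)^5+552*0^4+3132*0^3+8037*0^2+9648*0+4401) * Real.sqrt (3*0^2+9*0+9) -
          (16*(0:ℝ)^2+60*0+57)*Real.sqrt 3 *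
            Real.sqrt (-56*(0:ℝ)^7-555*0^6-1935*0^5-1620*0^4+7173*0^3+22788*0^2+26649*0+11907)) /
        (64*(0:ℝ)^6+672*0^5+2916*0^4+6624*0^3+8181*0^2+4995*0+999) )^2 = (745/37)^2 := by
    norm_num [h9, h11907]
    ring_nf
    nlinarith [h3]
  rw [FAW, key, Real.sqrt_sq (by norm_num)]
  norm_num

lemma FAW_cont : ContinuousAt FAW 0 := by
  unfold FAW
  fun_prop (disch := norm_num)


/-- `c(n) → 2/37` as `n → ∞`. -/
theorem cMin_tendsto : Filter.Tendsto cMin Filter.atTop (nhds (2 / 37)) := by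
  have h1 : Filter.Tendsto (fun n : ℕ => ((n:ℝ))⁻¹) Filter.atTop (nhds 0) :=
    tendsto_inv_atTop_zero.comp tendsto_natCast_atTop_atTop
  have h2 := (FAW_cont.tendsto.comp h1)
  rw [FAW_zero] at h2
  refine Filter.Tendsto.congr' ?_ h2
  filter_upwards [Filter.eventually_ge_atTop 1] with n hn
  exact (key_eq (n : ℝ) (by exact_mod_cast hn)).symm
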